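/- Let λ : M_{4n}(K) → K be a linear functional such that for all 1 ≤ i,j,k,l ≤ n: λ(y_{2i,2j}y_{2k,2l} − y_{2k,2l}y_{2i,2j}) = 0, λ(y_{2i-1,2j-1}y_{2k-1,2l-1} − y_{2k-1,2l-1}y_{2i-1,2j-1}) = 0, λ(θ_{2i,2j}θ_{2k,2l} + θ_{2k,2l}θ_{2i,2j}) = 0, and λ(θ_{2i-1,2j-1}θ_{2k-1,2l-1} + θ_{2k-1,2l-1}θ_{2i-1,2j-1}) = 0. Then λ(y_{2i,2j}) = 0 and λ(y_{2i-1,2j-1}) = 0 for all 1 ≤ i,j ≤ n. In other words, the only character on the zero graded piece g₀ of the 3-graded queer Lie superalgebra q(2n) (equivalently, on the structure algebra str(JQ(n))) is the trivial character λ = 0. -/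
import Mathlib


open Matrix

/-- Elementary matrix with 1-based indices: entry `(a, b)` is `1`, all other entries `0`. -/
def Emat (K : Type*) [Field K] (N a b : ℕ) : Matrix (Fin N) (Fin N) K :=
  Matrix.of fun p q => if (p : ℕ) + 1 = a ∧ (q : ℕ) + 1 = b then 1 else 0

/-- The even generators `y_{ij} = E_{ij} + E_{i+2n,j+2n}` of the queer
Lie superalgebra `q(2n) ⊂ M_{4n}(K)`. -/
def yQ (K : Type*) [Field K] (n i j : ℕ) : Matrix (Fin (4 * n)) (Fin (4 * n)) K :=
  Emat K (4 * n) i j + Emat K (4 * n) (i + 2 * n) (j + 2 * n)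

/-- The odd generators `θ_{ij} = E_{i+2n,j} + E_{i,j+2n}` of `q(2n)`. -/
def tQ (K : Type*) [Field K] (n i j : ℕ) : Matrix (Fin (4 * n)) (Fin (4 * n)) K :=
  Emat K (4 * n) (i + 2 * n) j + Emat K (4 * n) i (j + 2 * n)

lemma Emat_mul (K : Type*) [Field K] (N a b c d : ℕ) (hb : 1 ≤ b) (hbN : b ≤ N) :
    Emat K N a b * Emat K N c d = if b = c then Emat K N a d else 0 := by
  ext p q
  have hb' : b - 1 < N := by omega
  simp only [Matrix.mul_apply, Emat, Matrix.of_apply]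
  rw [Finset.sum_eq_single (⟨b - 1, hb'⟩ : Fin N)]
  · by_cases hbc : b = c <;> by_cases hp : (p : ℕ) + 1 = a <;>
      by_cases hq : (q : ℕ) + 1 = d <;> simp_all
  · intro r _ hr
    have : (r : ℕ) + 1 ≠ b := by
      intro h; apply hr; apply Fin.ext; simp; omega
    simp [this]
  · intro h; exact absurd (Finset.mem_univ _) h

lemma tQ_mul (K : Type*) [Field K] (n a b c d : ℕ) (hb : 1 ≤ b) (hb2 : b ≤ 2 * n)
    (hc : 1 ≤ c) (hc2 : c ≤ 2 * n) :
    tQ K n a b * tQ K n c d = if b = c then yQ K n a d else 0 := by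
  unfold tQ yQ
  rw [add_mul, mul_add, mul_add,
    Emat_mul K (4 * n) (a + 2 * n) b (c + 2 * n) d hb (by omega),
    Emat_mul K (4 * n) (a + 2 * n) b c (d + 2 * n) hb (by omega),
    Emat_mul K (4 * n) a (b + 2 * n) (c + 2 * n) d (by omega) (by omega),
    Emat_mul K (4 * n) a (b + 2 * n) c (d + 2 * n) (by omega) (by omega)]
  have h1 : b ≠ c + 2 * n := by omega
  have h2 : b + 2 * n ≠ c := by omega
  have h3 : (b + 2 * n = c + 2 * n) ↔ b = c := by omega
  have hn : n ≠ 0 := by omega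
  by_cases hbc : b = c <;> simp [h1, h2, h3, hbc, hn] <;> abel

lemma half_zero (K : Type*) [Field K] [CharZero K] {x : K} (h : x + x = 0) : x = 0 := by
  have h2 : (2 : K) * x = 0 := by rw [two_mul]; exact h
  exact (mul_eq_zero.mp h2).resolve_left two_ne_zero

/-- the only character on the zero graded piece `g₀` of the 3-graded queer
Lie superalgebra `q(2n)` (equivalently on `str(JQ(n))`) is the trivial one. -/
theorem q_character_trivial (K : Type*) [Field K] [CharZero K] (n : ℕ) (hn : 2 ≤ n)
    (lam : Matrix (Fin (4 * n)) (Fin (4 * n)) K →ₗ[K] K)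
    (hyy : ∀ i j k l : ℕ, 1 ≤ i → i ≤ n → 1 ≤ j → j ≤ n → 1 ≤ k → k ≤ n → 1 ≤ l → l ≤ n →
      lam (yQ K n (2 * i) (2 * j) * yQ K n (2 * k) (2 * l)
        - yQ K n (2 * k) (2 * l) * yQ K n (2 * i) (2 * j)) = 0)
    (hyy' : ∀ i j k l : ℕ, 1 ≤ i → i ≤ n → 1 ≤ j → j ≤ n → 1 ≤ k → k ≤ n → 1 ≤ l → l ≤ n →
      lam (yQ K n (2 * i - 1) (2 * j - 1) * yQ K n (2 * k - 1) (2 * l - 1)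
        - yQ K n (2 * k - 1) (2 * l - 1) * yQ K n (2 * i - 1) (2 * j - 1)) = 0)
    (htt : ∀ i j k l : ℕ, 1 ≤ i → i ≤ n → 1 ≤ j → j ≤ n → 1 ≤ k → k ≤ n → 1 ≤ l → l ≤ n →
      lam (tQ K n (2 * i) (2 * j) * tQ K n (2 * k) (2 * l)
        + tQ K n (2 * k) (2 * l) * tQ K n (2 * i) (2 * j)) = 0)
    (htt' : ∀ i j k l : ℕ, 1 ≤ i → i ≤ n → 1 ≤ j → j ≤ n → 1 ≤ k → k ≤ n → 1 ≤ l → l ≤ n →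
      lam (tQ K n (2 * i - 1) (2 * j - 1) * tQ K n (2 * k - 1) (2 * l - 1)
        + tQ K n (2 * k - 1) (2 * l - 1) * tQ K n (2 * i - 1) (2 * j - 1)) = 0) :
    ∀ i j : ℕ, 1 ≤ i → i ≤ n → 1 ≤ j → j ≤ n →
      lam (yQ K n (2 * i) (2 * j)) = 0 ∧ lam (yQ K n (2 * i - 1) (2 * j - 1)) = 0 := by
  intro i j hi1 hin hj1 hjn
  constructor
  · have h := htt i i i j hi1 hin hi1 hin hi1 hin hj1 hjn
    rw [tQ_mul K n (2 * i) (2 * i) (2 * i) (2 * j) (by omega) (by omega) (by omega) (by omega),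
        tQ_mul K n (2 * i) (2 * j) (2 * i) (2 * i) (by omega) (by omega) (by omega) (by omega)]
      at h
    by_cases hij : i = j
    · subst hij
      simp only [if_pos rfl, map_add] at h
      exact half_zero K h
    · have h1 : (2 * j : ℕ) ≠ 2 * i := by omega
      simp only [if_pos rfl, if_neg h1, add_zero] at h
      exact h
  · have h := htt' i i i j hi1 hin hi1 hin hi1 hin hj1 hjn
    rw [tQ_mul K n (2 * i - 1) (2 * i - 1) (2 * i - 1) (2 * j - 1)
          (by omega) (by omega) (by omega) (by omega),
        tQ_mul K n (2 * i - 1) (2 * j - 1) (2 * i - 1) (2 * i - 1)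
          (by omega) (by omega) (by omega) (by omega)] at h
    by_cases hij : i = j
    · subst hij
      simp only [if_pos rfl, map_add] at h
      exact half_zero K h
    · have h1 : (2 * j - 1 : ℕ) ≠ 2 * i - 1 := by omega
      simp only [if_pos rfl, if_neg h1, add_zero] at h
      exact h
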